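/- arXiv:1903.04136 — 6 statements merged into one kernel-verified Lean document; each statement's English description precedes it below -/
import Mathlib

section
/- For all positive integers m and nonnegative integers n, the sum 1^n + 3^n + 5^n + ... + (2m-1)^n equals 2^n * (b_{n+1}(m) - b_{n+1})/(n+1), where b_n(x) are the type 2 Bernoulli polynomials. -/
open PowerSeries Finset

/-- For all positive integers m and nonnegative integers n,
1^n + 3^n + ... + (2m-1)^n = 2^n * (b_{n+1}(m) - b_{n+1})/(n+1),
where b_n(x) are the type 2 Bernoulli polynomials, defined by
(t/(e^{t/2} - e^{-t/2})) e^{xt} = ∑ b_n(x) t^n/n!. -/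
theorem type2_bernoulli_power_sum
    (b : ℕ → ℝ → ℝ)
    (hb : ∀ x : ℝ,
      (PowerSeries.mk fun n => b n x / (n.factorial : ℝ)) *
        (rescale (1/2 : ℝ) (exp ℝ) - rescale (-(1/2) : ℝ) (exp ℝ))
        = PowerSeries.X * rescale x (exp ℝ))
    (m : ℕ) (hm : 0 < m) (n : ℕ) :
    ∑ k ∈ range m, ((2 * (k : ℝ) + 1)) ^ n
      = 2 ^ n * (b (n + 1) (m : ℝ) - b (n + 1) 0) / (n + 1) := by
  set D := rescale (1/2 : ℝ) (exp ℝ) - rescale (-(1/2) : ℝ) (exp ℝ) with hDdef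
  have hD : D ≠ 0 := by
    intro h
    have h1 := congrArg (coeff (R := ℝ) 1) h
    simp [hDdef, coeff_rescale, coeff_exp] at h1
  have key : ∀ x : ℝ, b (n+1) (x+1) - b (n+1) x = ((n:ℝ)+1) * (x + 1/2)^n := by
    intro x
    have hmul : ((PowerSeries.mk fun j => b j (x+1) / (j.factorial : ℝ)) -
        (PowerSeries.mk fun j => b j x / (j.factorial : ℝ))) * D
        = (PowerSeries.X * rescale (x + 1/2) (exp ℝ)) * D := by
      rw [sub_mul, hb, hb, hDdef, mul_sub, mul_assoc, mul_assoc,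
        exp_mul_exp_eq_exp_add, exp_mul_exp_eq_exp_add]
      ring_nf
    have heq := mul_right_cancel₀ hD hmul
    have hc := congrArg (coeff (R := ℝ) (n+1)) heq
    simp [coeff_succ_X_mul, coeff_rescale, coeff_exp, map_sub] at hc
    have hfs : (((n+1).factorial : ℕ) : ℝ) = ((n:ℝ)+1) * (n.factorial : ℝ) := by
      rw [Nat.factorial_succ]; push_cast; ring
    rw [hfs] at hc
    have hfac : ((n.factorial : ℕ) : ℝ) ≠ 0 := by positivity
    have hn1 : ((n:ℝ)+1) ≠ 0 := by positivity
    field_simp at hc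
    have h2 : (x*2+1)^n = 2^n*(x+1/2)^n := by rw [← mul_pow]; ring_nf
    rw [show (x*2+1)/2 = x+1/2 by ring] at hc
    have h2n : (2:ℝ)^n * (n.factorial : ℝ) ≠ 0 := by positivity
    apply mul_right_cancel₀ h2n
    linear_combination ((2:ℝ)^n * (n.factorial : ℝ)) * hc
  have tel : ∑ k ∈ range m, (b (n+1) ((k:ℝ)+1) - b (n+1) (k:ℝ))
      = b (n+1) (m:ℝ) - b (n+1) 0 := by
    have h := Finset.sum_range_sub (f := fun k : ℕ => b (n+1) (k:ℝ)) m
    simpa [Nat.cast_succ] using h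
  have hn1 : ((n:ℝ)+1) ≠ 0 := by positivity
  have hsum : ∑ k ∈ range m, ((2 * (k : ℝ) + 1)) ^ n
      = 2^n / ((n:ℝ)+1) * ∑ k ∈ range m, (b (n+1) ((k:ℝ)+1) - b (n+1) (k:ℝ)) := by
    rw [Finset.mul_sum]
    apply Finset.sum_congr rfl
    intro k _
    rw [key (k:ℝ)]
    have h2 : (2*(k:ℝ)+1)^n = 2^n*((k:ℝ)+1/2)^n := by rw [← mul_pow]; ring_nf
    rw [h2]
    field_simp
  rw [hsum, tel]
  push_cast
  ring
end

section
/- For all nonnegative integers n, the fully degenerate type 2 Bernoulli polynomial satisfies B_{n,\lambda}(x) = \sum_{l=0}^{n} S_{1,\lambda}(n,l) b_l(x), where S_{1,\lambda}(n,l) are the degenerate Stirling numbers of the first kind and b_l(x) the type 2 Bernoulli polynomials. -/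
open PowerSeries Finset

/-- Generalized falling factorial (x)_{n,λ} = x(x-λ)(x-2λ)⋯(x-(n-1)λ), with (x)_{0,λ} = 1. -/
def degFall (lam x : ℝ) : ℕ → ℝ
  | 0 => 1
  | k + 1 => degFall lam x k * (x - (k : ℝ) * lam)

/-- The degenerate exponential e_λ^x(t) = (1+λt)^{x/λ} = ∑_k (x)_{k,λ} t^k/k!,
as a formal power series. -/
noncomputable def degExp (lam x : ℝ) : PowerSeries ℝ :=
  PowerSeries.mk fun k => degFall lam x k / (k.factorial : ℝ)

/-- The power series of log(1+λt) = ∑_{n≥1} (-1)^{n+1} λ^n t^n / n. -/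
noncomputable def logSeries (lam : ℝ) : PowerSeries ℝ :=
  PowerSeries.mk fun n => if n = 0 then 0 else (-1) ^ (n + 1) * lam ^ n / (n : ℝ)

noncomputable def uSer (lam : ℝ) : PowerSeries ℝ :=
  PowerSeries.mk fun n => if n = 0 then 0 else (-1) ^ (n + 1) * lam ^ (n - 1) / (n : ℝ)

lemma C_mul_uSer (lam : ℝ) : PowerSeries.C (R := ℝ) lam * uSer lam = logSeries lam := by
  ext n
  rw [PowerSeries.coeff_C_mul]
  cases n with
  | zero => simp [uSer, logSeries]
  | succ m =>
    simp only [uSer, logSeries, PowerSeries.coeff_mk, Nat.succ_ne_zero, if_false,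
      Nat.add_sub_cancel]
    rw [pow_succ]
    ring

lemma coeff_deriv_uSer (lam : ℝ) (n : ℕ) :
    (PowerSeries.coeff n) (PowerSeries.derivative ℝ (uSer lam)) = (-lam) ^ n := by
  rw [PowerSeries.coeff_derivative]
  simp only [uSer, PowerSeries.coeff_mk, Nat.succ_ne_zero, if_false, Nat.add_sub_cancel]
  have h : ((n : ℝ) + 1) ≠ 0 := by positivity
  field_simp
  rw [neg_pow lam n, pow_succ (-1 : ℝ) (n+1)]
  push_cast
  ring

lemma ode_uSer (lam : ℝ) :
    (1 + PowerSeries.C (R := ℝ) lam * PowerSeries.X) * (PowerSeries.derivative ℝ (uSer lam)) = 1 := by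
  ext n
  rw [add_mul, one_mul, map_add, mul_assoc, PowerSeries.coeff_C_mul]
  cases n with
  | zero => simp [coeff_deriv_uSer]
  | succ m =>
    rw [PowerSeries.coeff_succ_X_mul, coeff_deriv_uSer, coeff_deriv_uSer]
    simp [pow_succ]
    ring




lemma coeff_uSer_pow_eq_zero (lam : ℝ) {l m : ℕ} (h : m < l) :
    (PowerSeries.coeff m) (uSer lam ^ l) = 0 := by
  have hX : (PowerSeries.X : PowerSeries ℝ) ∣ uSer lam :=
    PowerSeries.X_dvd_iff.mpr (by simp [uSer])
  exact PowerSeries.X_pow_dvd_iff.mp (pow_dvd_pow_of_dvd hX l) m h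

lemma key_rec (lam : ℝ) (l n : ℕ) :
    ((n : ℝ) + 1) * (PowerSeries.coeff (n+1)) (uSer lam ^ (l+1))
      + lam * n * (PowerSeries.coeff n) (uSer lam ^ (l+1))
      = ((l : ℝ) + 1) * (PowerSeries.coeff n) (uSer lam ^ l) := by
  have hlp : PowerSeries.derivative ℝ (uSer lam ^ (l+1))
      = (l+1) • (uSer lam ^ l * PowerSeries.derivative ℝ (uSer lam)) := by
    simpa using Derivation.leibniz_pow (PowerSeries.derivative ℝ) (uSer lam) (l+1)
  have hmul : (1 + PowerSeries.C (R := ℝ) lam * PowerSeries.X)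
        * PowerSeries.derivative ℝ (uSer lam ^ (l+1)) = (l+1) • uSer lam ^ l := by
    rw [hlp, mul_smul_comm]
    rw [show (1 + PowerSeries.C (R := ℝ) lam * PowerSeries.X) *
        (uSer lam ^ l * PowerSeries.derivative ℝ (uSer lam))
        = uSer lam ^ l * ((1 + PowerSeries.C (R := ℝ) lam * PowerSeries.X)
            * PowerSeries.derivative ℝ (uSer lam)) by ring, ode_uSer, mul_one]
  have hco := congrArg (PowerSeries.coeff n) hmul
  rw [add_mul, one_mul, map_add, mul_assoc, PowerSeries.coeff_C_mul, map_nsmul] at hco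
  rw [PowerSeries.coeff_derivative, nsmul_eq_mul] at hco
  cases n with
  | zero =>
    rw [PowerSeries.coeff_zero_X_mul] at hco
    push_cast at hco ⊢
    rw [mul_zero, zero_mul, add_zero]
    linarith [hco]
  | succ m =>
    rw [PowerSeries.coeff_succ_X_mul, PowerSeries.coeff_derivative] at hco
    push_cast at hco ⊢
    nlinarith [hco]

lemma degExp_eq_exp_u (lam y : ℝ) (n : ℕ) :
    degFall lam y n / (n.factorial : ℝ)
      = ∑ l ∈ range (n+1), y ^ l / (l.factorial : ℝ) * (PowerSeries.coeff n) (uSer lam ^ l) := by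
  induction n with
  | zero => simp [degFall]
  | succ n ih =>
    have hfac : (n.factorial : ℝ) ≠ 0 := by positivity
    have hn1 : ((n : ℝ) + 1) ≠ 0 := by positivity
    -- compute (n+1) * RHS
    have hmain : ((n : ℝ) + 1) *
        (∑ l ∈ range (n+2), y ^ l / (l.factorial : ℝ)
            * (PowerSeries.coeff (n+1)) (uSer lam ^ l))
        = (y - (n : ℝ) * lam) * (degFall lam y n / (n.factorial : ℝ)) := by
      rw [Finset.mul_sum]
      have hterm : ∀ l ∈ range (n+2),
          ((n : ℝ) + 1) * (y ^ l / (l.factorial : ℝ)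
              * (PowerSeries.coeff (n+1)) (uSer lam ^ l))
          = (if l = 0 then 0 else
              y ^ l / (l.factorial : ℝ) * (((l : ℝ)) * (PowerSeries.coeff n) (uSer lam ^ (l-1))))
            - lam * n * (y ^ l / (l.factorial : ℝ) * (PowerSeries.coeff n) (uSer lam ^ l)) := by
        intro l _
        cases l with
        | zero =>
          rcases n with _ | m <;> simp [PowerSeries.coeff_one]
        | succ m =>
          have hk := key_rec lam m n
          simp only [Nat.succ_ne_zero, if_false, Nat.add_sub_cancel]
          push_cast
          linear_combination (y ^ (m + 1) / ((m + 1).factorial : ℝ)) * hk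
      rw [Finset.sum_congr rfl hterm, Finset.sum_sub_distrib]
      -- second sum: drop the last (zero) term and use ih
      have h2 : ∑ l ∈ range (n+2), lam * n *
            (y ^ l / (l.factorial : ℝ) * (PowerSeries.coeff n) (uSer lam ^ l))
          = lam * n * (degFall lam y n / (n.factorial : ℝ)) := by
        rw [Finset.sum_range_succ, coeff_uSer_pow_eq_zero lam (Nat.lt_succ_self n)]
        rw [ih, Finset.mul_sum]
        ring
      -- first sum: peel off l = 0 and reindex
      have h1 : ∑ l ∈ range (n+2), (if l = 0 then 0 else
            y ^ l / (l.factorial : ℝ) * (((l : ℝ)) * (PowerSeries.coeff n) (uSer lam ^ (l-1))))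
          = y * (degFall lam y n / (n.factorial : ℝ)) := by
        rw [Finset.sum_range_succ']
        norm_num
        rw [ih, Finset.mul_sum]
        apply Finset.sum_congr rfl
        intro m _
        have : ((m+1).factorial : ℝ) = ((m : ℝ) + 1) * (m.factorial : ℝ) := by
          push_cast [Nat.factorial_succ]; ring
        rw [this]
        have hm1 : ((m : ℝ) + 1) ≠ 0 := by positivity
        have hmf : (m.factorial : ℝ) ≠ 0 := by positivity
        field_simp
        ring
      rw [h1, h2]
      ring
    -- conclude
    have hflip : degFall lam y (n+1) / ((n+1).factorial : ℝ)
        = (y - (n : ℝ) * lam) * (degFall lam y n / (n.factorial : ℝ)) / ((n : ℝ) + 1) := by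
      show degFall lam y n * (y - (n : ℝ) * lam) / ((n+1).factorial : ℝ) = _
      rw [Nat.factorial_succ]
      push_cast
      field_simp
    rw [hflip, ← hmain]
    field_simp

lemma triangle_sum (n : ℕ) (F : ℕ → ℕ → ℝ) (hF : ∀ i j, n < i + j → F i j = 0) :
    ∑ i ∈ range (n+1), ∑ j ∈ range (n+1), F i j
      = ∑ k ∈ range (n+1), ∑ i ∈ range (k+1), F i (k - i) := by
  have hrhs : ∀ k, ∑ i ∈ range (k+1), F i (k - i)
      = ∑ p ∈ Finset.HasAntidiagonal.antidiagonal k, F p.1 p.2 := by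
    intro k
    rw [Finset.Nat.sum_antidiagonal_eq_sum_range_succ_mk]
  simp_rw [hrhs]
  rw [← Finset.sum_product']
  have hdisj : ((range (n+1) : Finset ℕ) : Set ℕ).PairwiseDisjoint
      (fun k => (Finset.HasAntidiagonal.antidiagonal k : Finset (ℕ × ℕ))) := by
    intro a _ c _ hac
    apply Finset.disjoint_left.mpr
    intro p hpa hpc
    rw [Finset.HasAntidiagonal.mem_antidiagonal] at hpa hpc
    exact hac (hpa ▸ hpc)
  rw [← Finset.sum_biUnion hdisj]
  refine (Finset.sum_subset ?_ ?_).symm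
  · intro p hp
    rw [Finset.mem_biUnion] at hp
    obtain ⟨k, hk, hpk⟩ := hp
    rw [Finset.HasAntidiagonal.mem_antidiagonal] at hpk
    rw [Finset.mem_range] at hk
    rw [Finset.mem_product, Finset.mem_range, Finset.mem_range]
    omega
  · intro p hp hnp
    apply hF
    by_contra hle
    push_neg at hle
    exact hnp (Finset.mem_biUnion.mpr ⟨p.1 + p.2, Finset.mem_range.mpr (by omega),
      Finset.HasAntidiagonal.mem_antidiagonal.mpr rfl⟩)

noncomputable def psi (lam : ℝ) (a : ℕ → ℝ) : PowerSeries ℝ :=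
  PowerSeries.mk fun n => ∑ k ∈ range (n+1), a k * (PowerSeries.coeff n) (uSer lam ^ k)

lemma coeff_psi (lam : ℝ) (a : ℕ → ℝ) (n : ℕ) :
    (PowerSeries.coeff n) (psi lam a)
      = ∑ k ∈ range (n+1), a k * (PowerSeries.coeff n) (uSer lam ^ k) := by
  simp [psi]

lemma psi_mul (lam : ℝ) (a c : ℕ → ℝ) :
    psi lam a * psi lam c = psi lam (fun k => ∑ i ∈ range (k+1), a i * c (k - i)) := by
  ext n
  rw [PowerSeries.coeff_mul, Finset.Nat.sum_antidiagonal_eq_sum_range_succ_mk, coeff_psi]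
  -- extend inner sums
  have hext : ∀ p ∈ range (n+1),
      (PowerSeries.coeff p) (psi lam a) * (PowerSeries.coeff (n - p)) (psi lam c)
      = ∑ i ∈ range (n+1), ∑ j ∈ range (n+1),
          a i * c j * ((PowerSeries.coeff p) (uSer lam ^ i)
            * (PowerSeries.coeff (n-p)) (uSer lam ^ j)) := by
    intro p hp
    rw [Finset.mem_range] at hp
    rw [coeff_psi, coeff_psi]
    rw [Finset.sum_mul_sum]
    rw [Finset.sum_subset (Finset.range_subset_range.mpr (by omega : p + 1 ≤ n + 1))]
    · apply Finset.sum_congr rfl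
      intro i _
      rw [Finset.sum_subset (Finset.range_subset_range.mpr (by omega : n - p + 1 ≤ n + 1))]
      · apply Finset.sum_congr rfl; intro j _; ring
      · intro j _ hj
        rw [Finset.mem_range, not_lt] at hj
        rw [coeff_uSer_pow_eq_zero lam (show n - p < j by omega)]
        ring
    · intro i _ hi
      rw [Finset.mem_range, not_lt] at hi
      rw [coeff_uSer_pow_eq_zero lam (show p < i by omega)]
      simp
  rw [Finset.sum_congr rfl hext]
  rw [Finset.sum_comm]
  -- now LHS = ∑_i ∑_p ∑_j; swap p and j inside
  have hswap : ∀ i ∈ range (n+1),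
      ∑ p ∈ range (n+1), ∑ j ∈ range (n+1),
          a i * c j * ((PowerSeries.coeff p) (uSer lam ^ i)
            * (PowerSeries.coeff (n-p)) (uSer lam ^ j))
      = ∑ j ∈ range (n+1), a i * c j * (PowerSeries.coeff n) (uSer lam ^ (i + j)) := by
    intro i _
    rw [Finset.sum_comm]
    apply Finset.sum_congr rfl
    intro j _
    rw [← Finset.mul_sum]
    congr 1
    rw [pow_add, PowerSeries.coeff_mul, Finset.Nat.sum_antidiagonal_eq_sum_range_succ_mk]
  rw [Finset.sum_congr rfl hswap]
  -- apply triangle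
  rw [triangle_sum n (fun i j => a i * c j * (PowerSeries.coeff n) (uSer lam ^ (i + j)))
    (by
      intro i j hij
      show a i * c j * (PowerSeries.coeff n) (uSer lam ^ (i + j)) = 0
      rw [coeff_uSer_pow_eq_zero lam hij]; ring)]
  apply Finset.sum_congr rfl
  intro k hk
  rw [Finset.sum_mul]
  apply Finset.sum_congr rfl
  intro i hi
  rw [Finset.mem_range] at hi
  have : i + (k - i) = k := by omega
  rw [this]


lemma poly_ext {m : ℕ} {a c : ℕ → ℝ}
    (h : ∀ x : ℝ, ∑ i ∈ range m, a i * x ^ i = ∑ i ∈ range m, c i * x ^ i) :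
    ∀ i ∈ range m, a i = c i := by
  have hp : (∑ i ∈ range m, Polynomial.C (a i) * Polynomial.X ^ i)
      = (∑ i ∈ range m, Polynomial.C (c i) * Polynomial.X ^ i) := by
    apply Polynomial.funext
    intro x
    simpa [Polynomial.eval_finset_sum] using h x
  intro i hi
  have h2 := congrArg (fun p => Polynomial.coeff p i) hp
  simpa [Polynomial.finset_sum_coeff, Polynomial.coeff_C_mul, Polynomial.coeff_X_pow,
    Finset.mem_range.mp hi] using h2

/-- B_{n,λ}(x) = ∑_{l=0}^n S_{1,λ}(n,l) b_l(x), where B_{n,λ}(x) are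
the fully degenerate type 2 Bernoulli polynomials, S_{1,λ} the degenerate Stirling
numbers of the first kind, and b_l(x) the type 2 Bernoulli polynomials. -/
theorem fully_degenerate_type2_bernoulli_stirling
    (lam : ℝ) (hlam : lam ≠ 0)
    (B : ℕ → ℝ → ℝ) (S : ℕ → ℕ → ℝ) (b : ℕ → ℝ → ℝ)
    (hB : ∀ x : ℝ,
      (PowerSeries.mk fun n => B n x / (n.factorial : ℝ)) *
        (PowerSeries.C (R := ℝ) lam * (degExp lam (1/2) - degExp lam (-(1/2))))
        = logSeries lam * degExp lam x)
    (hS : ∀ (n : ℕ) (x : ℝ), degFall lam x n = ∑ l ∈ range (n + 1), S n l * x ^ l)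
    (hb : ∀ x : ℝ,
      (PowerSeries.mk fun n => b n x / (n.factorial : ℝ)) *
        (rescale (1/2 : ℝ) (exp ℝ) - rescale (-(1/2) : ℝ) (exp ℝ))
        = PowerSeries.X * rescale x (exp ℝ))
    (n : ℕ) (x : ℝ) :
    B n x = ∑ l ∈ range (n + 1), S n l * b l x := by
  classical
  have hfac : ∀ m : ℕ, ((m.factorial : ℝ)) ≠ 0 := fun m => by positivity
  set a : ℕ → ℝ := fun k => b k x / k.factorial with ha
  set D : PowerSeries ℝ :=
    PowerSeries.C (R := ℝ) lam * (degExp lam (1/2) - degExp lam (-(1/2))) with hDdef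
  -- degenerate exponentials are psi of exponential sequences
  have hpsiE : ∀ y : ℝ, degExp lam y = psi lam (fun k => y ^ k / k.factorial) := by
    intro y; ext n
    rw [coeff_psi]
    simpa [degExp] using degExp_eq_exp_u lam y n
  -- psi of delta_1 is uSer
  have hpsid1 : psi lam (fun k => if k = 1 then (1:ℝ) else 0) = uSer lam := by
    ext n
    rw [coeff_psi]
    simp only [ite_mul, one_mul, zero_mul]
    rw [Finset.sum_ite_eq' (range (n+1)) 1 (fun k => (PowerSeries.coeff n) (uSer lam ^ k))]
    cases n with
    | zero => simp [uSer]
    | succ m => simp [pow_one]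
  -- psi is additive in the sequence (subtraction form)
  have hpsisub : ∀ e1 e2 : ℕ → ℝ,
      psi lam (fun k => e1 k - e2 k) = psi lam e1 - psi lam e2 := by
    intro e1 e2; ext n
    simp [coeff_psi, sub_mul, Finset.sum_sub_distrib]
  -- coefficients of rescaled exp
  have hresc : ∀ (y : ℝ) (j : ℕ),
      (PowerSeries.coeff j) (rescale y (exp ℝ)) = y ^ j / j.factorial := by
    intro y j
    rw [PowerSeries.coeff_rescale, PowerSeries.coeff_exp]
    rw [eq_ratCast (algebraMap ℚ ℝ) (1 / (j.factorial : ℚ))]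
    push_cast
    ring
  -- the convolution identity coming from hb
  have hconv : (fun k => ∑ i ∈ range (k+1), a i *
        ((1/2:ℝ) ^ (k-i) / (k-i).factorial - (-(1/2):ℝ) ^ (k-i) / (k-i).factorial))
      = fun k => ∑ i ∈ range (k+1),
          (if i = 1 then (1:ℝ) else 0) * (x ^ (k-i) / (k-i).factorial) := by
    funext k
    have h1 := congrArg (PowerSeries.coeff k) (hb x)
    rw [PowerSeries.coeff_mul, Finset.Nat.sum_antidiagonal_eq_sum_range_succ_mk] at h1
    have h2 : ∑ i ∈ range (k+1), a i *
        ((1/2:ℝ) ^ (k-i) / (k-i).factorial - (-(1/2):ℝ) ^ (k-i) / (k-i).factorial)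
        = (PowerSeries.coeff k) (PowerSeries.X * rescale x (exp ℝ)) := by
      rw [← h1]
      apply Finset.sum_congr rfl
      intro i _
      rw [PowerSeries.coeff_mk, map_sub, hresc, hresc]
    rw [h2]
    -- now compute RHS
    cases k with
    | zero => simp
    | succ m =>
      rw [PowerSeries.coeff_succ_X_mul, hresc]
      simp only [ite_mul, one_mul, zero_mul]
      rw [Finset.sum_ite_eq' (range (m+2)) 1 (fun i => x ^ (m+1-i) / (m+1-i).factorial)]
      simp
  -- the main generating function identity for the candidate series
  have hG : psi lam a * D = logSeries lam * degExp lam x := by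
    rw [hDdef, hpsiE (1/2), hpsiE (-(1/2)), ← hpsisub]
    calc psi lam a * (PowerSeries.C (R := ℝ) lam * psi lam
          (fun k => (1/2:ℝ) ^ k / k.factorial - (-(1/2):ℝ) ^ k / k.factorial))
        = PowerSeries.C (R := ℝ) lam * (psi lam a * psi lam
          (fun k => (1/2:ℝ) ^ k / k.factorial - (-(1/2):ℝ) ^ k / k.factorial)) := by ring
      _ = PowerSeries.C (R := ℝ) lam * psi lam (fun k => ∑ i ∈ range (k+1),
            (if i = 1 then (1:ℝ) else 0) * (x ^ (k-i) / (k-i).factorial)) := by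
          rw [psi_mul, hconv]
      _ = PowerSeries.C (R := ℝ) lam * (psi lam (fun k => if k = 1 then (1:ℝ) else 0)
            * psi lam (fun k => x ^ k / k.factorial)) := by rw [psi_mul]
      _ = (PowerSeries.C (R := ℝ) lam * uSer lam) * psi lam (fun k => x ^ k / k.factorial) := by
          rw [hpsid1]; ring
      _ = logSeries lam * degExp lam x := by rw [C_mul_uSer, hpsiE x]
  -- D is nonzero
  have hDne : D ≠ 0 := by
    intro h0
    have h1 := congrArg (PowerSeries.coeff 1) h0
    rw [hDdef] at h1
    simp [degExp, degFall] at h1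
    exact hlam (by linarith)
  -- cancel D
  have hBpsi : (PowerSeries.mk fun n => B n x / (n.factorial : ℝ)) = psi lam a :=
    mul_right_cancel₀ hDne ((hB x).trans hG.symm)
  -- identify the Stirling numbers
  have hSid : ∀ l ∈ range (n+1), S n l
      = (n.factorial : ℝ) * (PowerSeries.coeff n) (uSer lam ^ l) / l.factorial := by
    apply poly_ext
    intro y
    rw [← hS n y]
    have h := degExp_eq_exp_u lam y n
    have h2 : degFall lam y n = (n.factorial : ℝ) *
        ∑ l ∈ range (n+1), y ^ l / (l.factorial : ℝ) * (PowerSeries.coeff n) (uSer lam ^ l) := by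
      rw [← h]; field_simp
    rw [h2, Finset.mul_sum]
    apply Finset.sum_congr rfl
    intro l _
    ring
  -- conclude
  have hcn := congrArg (PowerSeries.coeff n) hBpsi
  rw [PowerSeries.coeff_mk, coeff_psi] at hcn
  have hBn : B n x = (n.factorial : ℝ) * (B n x / n.factorial) := by field_simp
  rw [hBn, hcn, Finset.mul_sum]
  apply Finset.sum_congr rfl
  intro l hl
  rw [hSid l hl, ha]
  have hlf := hfac l
  field_simp
end

section
/- For all nonnegative integers n, the fully degenerate type 2 Bernoulli number satisfies B_{n,\lambda} = \sum_{l=0}^{n} C(n,l) \lambda^l d_l b_{n-l,\lambda}, where d_l are the Daehee numbers and b_{k,\lambda} the degenerate Carlitz type 2 Bernoulli numbers. -/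
open PowerSeries Finset

/-- B_{n,λ} = ∑_{l=0}^n C(n,l) λ^l d_l b_{n-l,λ}, where d_l are the
Daehee numbers (log(1+t)/t = ∑ d_n t^n/n!) and b_{k,λ} the degenerate Carlitz
type 2 Bernoulli numbers (t/(e_λ^{1/2}(t)-e_λ^{-1/2}(t)) = ∑ b_{n,λ} t^n/n!). -/
theorem fully_degenerate_type2_bernoulli_daehee
    (lam : ℝ) (hlam : lam ≠ 0)
    (B : ℕ → ℝ) (d : ℕ → ℝ) (bl : ℕ → ℝ)
    (hB : (PowerSeries.mk fun n => B n / (n.factorial : ℝ)) *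
        (PowerSeries.C (R := ℝ) lam * (degExp lam (1/2) - degExp lam (-(1/2))))
        = logSeries lam)
    (hd : (PowerSeries.mk fun n => d n / (n.factorial : ℝ)) * PowerSeries.X
        = logSeries 1)
    (hbl : (PowerSeries.mk fun n => bl n / (n.factorial : ℝ)) *
        (degExp lam (1/2) - degExp lam (-(1/2))) = PowerSeries.X)
    (n : ℕ) :
    B n = ∑ l ∈ range (n + 1), (n.choose l : ℝ) * lam ^ l * d l * bl (n - l) := by
  set S : PowerSeries ℝ := degExp lam (1/2) - degExp lam (-(1/2)) with hSdef
  have hS : S ≠ 0 := by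
    intro h
    apply X_ne_zero (R := ℝ)
    rw [← hbl, h, mul_zero]
  -- value of Daehee coefficients
  have hdc : ∀ k : ℕ, d k / (k.factorial : ℝ) = (-1) ^ k / ((k : ℝ) + 1) := by
    intro k
    have := congrArg (PowerSeries.coeff (R := ℝ) (k + 1)) hd
    rw [coeff_succ_mul_X, coeff_mk] at this
    simp only [logSeries, coeff_mk, Nat.succ_ne_zero, if_false, one_pow, mul_one] at this
    rw [this]
    push_cast
    rw [pow_succ, pow_succ]
    ring
  -- Dλ series
  set D : PowerSeries ℝ := PowerSeries.mk fun k => lam ^ k * d k / (k.factorial : ℝ) with hDdef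
  have hDlog : D * (PowerSeries.C (R := ℝ) lam * PowerSeries.X) = logSeries lam := by
    ext m
    cases m with
    | zero =>
      simp [logSeries, mul_comm D, mul_assoc, coeff_zero_eq_constantCoeff]
    | succ k =>
      rw [show D * (PowerSeries.C (R := ℝ) lam * PowerSeries.X) = (PowerSeries.C (R := ℝ) lam * D) * PowerSeries.X by ring,
        coeff_succ_mul_X, coeff_C_mul, coeff_mk]
      simp only [logSeries, coeff_mk, Nat.succ_ne_zero, if_false]
      have hk := hdc k
      rw [mul_div_assoc, hk]
      push_cast
      rw [pow_succ, pow_succ]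
      ring
  -- key identity of series
  have key : (PowerSeries.mk fun m => B m / (m.factorial : ℝ))
      = D * PowerSeries.mk fun m => bl m / (m.factorial : ℝ) := by
    have hne : PowerSeries.C (R := ℝ) lam * S ≠ 0 :=
      mul_ne_zero (by simpa using hlam) hS
    apply mul_right_cancel₀ hne
    rw [hB, ← hDlog, ← hbl]
    ring
  have hkey := congrArg (PowerSeries.coeff (R := ℝ) n) key
  rw [coeff_mk, coeff_mul, Finset.Nat.sum_antidiagonal_eq_sum_range_succ
      (fun i j => (PowerSeries.coeff (R := ℝ) i) D * (PowerSeries.coeff (R := ℝ) j)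
        (PowerSeries.mk fun m => bl m / (m.factorial : ℝ)))] at hkey
  simp only [hDdef, coeff_mk] at hkey
  have hfac : (n.factorial : ℝ) ≠ 0 := Nat.cast_ne_zero.mpr n.factorial_ne_zero
  have : B n = (n.factorial : ℝ) * ∑ l ∈ range (n + 1),
      lam ^ l * d l / (l.factorial : ℝ) * (bl (n - l) / ((n - l).factorial : ℝ)) := by
    rw [← hkey]
    field_simp
  rw [this, Finset.mul_sum]
  apply Finset.sum_congr rfl
  intro l hl
  have hln : l ≤ n := Nat.lt_succ_iff.mp (Finset.mem_range.mp hl)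
  have hch : (n.choose l : ℝ) = (n.factorial : ℝ) / ((l.factorial : ℝ) * ((n - l).factorial : ℝ)) := by
    rw [eq_div_iff (by positivity), ← mul_assoc]
    exact_mod_cast Nat.choose_mul_factorial_mul_factorial hln
  rw [hch]
  have h1 : (l.factorial : ℝ) ≠ 0 := Nat.cast_ne_zero.mpr l.factorial_ne_zero
  have h2 : ((n - l).factorial : ℝ) ≠ 0 := Nat.cast_ne_zero.mpr (n - l).factorial_ne_zero
  field_simp
end

section
/- For all nonnegative integers n and positive integers m, (2^n/(n+1)) (b_{n+1,\lambda}(m) - b_{n+1,\lambda}) = \sum_{l=0}^{m-1} (2l+1)_{n,2\lambda}, where b_{k,\lambda}(x) are the degenerate Carlitz type 2 Bernoulli polynomials and (x)_{n,\mu} is the generalized falling factorial. -/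
open PowerSeries Finset

lemma degFall_add (lam a b : ℝ) : ∀ n : ℕ,
    degFall lam (a + b) n =
      ∑ k ∈ range (n + 1), (n.choose k : ℝ) * degFall lam a k * degFall lam b (n - k)
  | 0 => by simp [degFall]
  | n + 1 => by
    have ih := degFall_add lam a b n
    have key : ∀ k ∈ range (n + 1),
        (n.choose k : ℝ) * degFall lam a k * degFall lam b (n - k) * ((a + b) - n * lam)
          = (n.choose k : ℝ) * degFall lam a (k + 1) * degFall lam b (n - k)
            + (n.choose k : ℝ) * degFall lam a k * degFall lam b (n - k + 1) := by
      intro k hk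
      have hkn : k ≤ n := Nat.lt_succ_iff.mp (mem_range.mp hk)
      have hcast : ((n - k : ℕ) : ℝ) = (n : ℝ) - k := by
        push_cast [Nat.cast_sub hkn]; ring
      simp only [degFall, hcast]
      ring
    calc degFall lam (a + b) (n + 1)
        = (∑ k ∈ range (n + 1),
            (n.choose k : ℝ) * degFall lam a k * degFall lam b (n - k)) * ((a + b) - n * lam) := by
          rw [show degFall lam (a+b) (n+1) = degFall lam (a+b) n * ((a+b) - n*lam) from rfl, ih]
      _ = ∑ k ∈ range (n + 1),
            ((n.choose k : ℝ) * degFall lam a (k + 1) * degFall lam b (n - k)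
              + (n.choose k : ℝ) * degFall lam a k * degFall lam b (n - k + 1)) := by
          rw [Finset.sum_mul]; exact Finset.sum_congr rfl key
      _ = ∑ k ∈ range (n + 2),
            ((n + 1).choose k : ℝ) * degFall lam a k * degFall lam b (n + 1 - k) := by
          rw [Finset.sum_add_distrib]
          rw [Finset.sum_range_succ' (fun k => ((n+1).choose k : ℝ) * degFall lam a k * degFall lam b (n + 1 - k))]
          have h1 : ∑ k ∈ range (n + 1),
              (n.choose k : ℝ) * degFall lam a k * degFall lam b (n - k + 1)
              = degFall lam b (n + 1)
                + ∑ k ∈ range (n + 1), (n.choose (k+1) : ℝ) * degFall lam a (k+1) * degFall lam b (n - k) := by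
            rw [Finset.sum_range_succ' (fun k => (n.choose k : ℝ) * degFall lam a k * degFall lam b (n - k + 1))]
            rw [Finset.sum_range_succ (fun k => (n.choose (k+1) : ℝ) * degFall lam a (k+1) * degFall lam b (n - k))]
            have : ∀ k ∈ range n, (n.choose (k+1) : ℝ) * degFall lam a (k+1) * degFall lam b (n - (k+1) + 1)
                = (n.choose (k+1) : ℝ) * degFall lam a (k+1) * degFall lam b (n - k) := by
              intro k hk
              have hk' := mem_range.mp hk
              have : n - (k+1) + 1 = n - k := by omega
              rw [this]
            rw [Finset.sum_congr rfl this]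
            simp only [Nat.choose_zero_right, Nat.cast_one, Nat.sub_zero, Nat.choose_succ_self,
              Nat.cast_zero, zero_mul, add_zero]
            simp only [degFall]
            ring
          rw [h1]
          have h2 : ∀ k ∈ range (n + 1),
              ((n+1).choose (k+1) : ℝ) * degFall lam a (k+1) * degFall lam b (n + 1 - (k+1))
              = (n.choose k : ℝ) * degFall lam a (k + 1) * degFall lam b (n - k)
                + (n.choose (k+1) : ℝ) * degFall lam a (k+1) * degFall lam b (n - k) := by
            intro k hk
            have : n + 1 - (k + 1) = n - k := by omega
            rw [this, Nat.choose_succ_succ, Nat.cast_add]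
            ring
          rw [Finset.sum_congr rfl h2, Finset.sum_add_distrib]
          simp only [Nat.choose_zero_right, Nat.cast_one, Nat.sub_zero, degFall]
          ring

lemma degExp_mul (lam a b : ℝ) : degExp lam a * degExp lam b = degExp lam (a + b) := by
  ext n
  rw [PowerSeries.coeff_mul]
  rw [Finset.Nat.sum_antidiagonal_eq_sum_range_succ_mk]
  simp only [degExp, coeff_mk]
  rw [degFall_add]
  rw [Finset.sum_div]
  refine Finset.sum_congr rfl fun k hk => ?_
  have hkn : k ≤ n := Nat.lt_succ_iff.mp (mem_range.mp hk)
  have hc : (n.choose k : ℝ) = (n.factorial : ℝ) / (k.factorial * (n - k).factorial) :=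
    Nat.cast_choose ℝ hkn
  have h1 : (k.factorial : ℝ) ≠ 0 := Nat.cast_ne_zero.mpr k.factorial_ne_zero
  have h2 : ((n - k).factorial : ℝ) ≠ 0 := Nat.cast_ne_zero.mpr (n - k).factorial_ne_zero
  have h3 : (n.factorial : ℝ) ≠ 0 := Nat.cast_ne_zero.mpr n.factorial_ne_zero
  rw [hc]
  field_simp

lemma degFall_two (lam x : ℝ) : ∀ n : ℕ, degFall (2 * lam) (2 * x) n = 2 ^ n * degFall lam x n
  | 0 => by simp [degFall]
  | n + 1 => by
    simp only [degFall, degFall_two lam x n]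
    ring

lemma degExp_sub_ne_zero (lam : ℝ) : degExp lam (1/2) - degExp lam (-(1/2)) ≠ 0 := by
  intro h
  have := congrArg (PowerSeries.coeff 1) h
  simp only [map_sub, degExp, coeff_mk, map_zero] at this
  norm_num [degFall] at this

theorem main_key (lam : ℝ)
    (bl : ℕ → ℝ → ℝ)
    (hbl : ∀ x : ℝ,
      (PowerSeries.mk fun n => bl n x / (n.factorial : ℝ)) *
        (degExp lam (1/2) - degExp lam (-(1/2)))
        = PowerSeries.X * degExp lam x)
    (n : ℕ) (m : ℕ) (hm : 0 < m) :
    2 ^ n / ((n : ℝ) + 1) * (bl (n + 1) (m : ℝ) - bl (n + 1) 0)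
      = ∑ l ∈ range m, degFall (2 * lam) (2 * (l : ℝ) + 1) n := by
  set D := degExp lam (1/2) - degExp lam (-(1/2)) with hD
  set S := ∑ l ∈ range m, degExp lam ((l : ℝ) + 1/2) with hS
  have hSD : S * D = degExp lam (m : ℝ) - degExp lam 0 := by
    rw [hS, Finset.sum_mul]
    have : ∀ l ∈ range m, degExp lam ((l : ℝ) + 1/2) * D
        = degExp lam ((l : ℝ) + 1) - degExp lam (l : ℝ) := by
      intro l _
      rw [hD, mul_sub, degExp_mul, degExp_mul,
        show ((l:ℝ)+1/2)+1/2 = (l:ℝ)+1 from by ring,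
        show ((l:ℝ)+1/2)+(-(1/2)) = (l:ℝ) from by ring]
    rw [Finset.sum_congr rfl this]
    have := Finset.sum_range_sub (fun l : ℕ => degExp lam (l : ℝ)) m
    simp only [Nat.cast_add, Nat.cast_one, Nat.cast_zero] at this ⊢
    rw [← this]
  have hmain : ((PowerSeries.mk fun k => bl k (m : ℝ) / (k.factorial : ℝ))
      - (PowerSeries.mk fun k => bl k 0 / (k.factorial : ℝ))) = PowerSeries.X * S := by
    apply mul_right_cancel₀ (degExp_sub_ne_zero lam)
    rw [sub_mul, hbl, hbl, mul_assoc, hSD, mul_sub]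
  have hc := congrArg (PowerSeries.coeff (n + 1)) hmain
  simp only [map_sub, coeff_mk, PowerSeries.coeff_succ_X_mul] at hc
  have hcS : (PowerSeries.coeff n) S
      = (∑ l ∈ range m, degFall lam ((l : ℝ) + 1/2) n) / (n.factorial : ℝ) := by
    rw [hS, map_sum, Finset.sum_div]
    refine Finset.sum_congr rfl fun l _ => ?_
    simp only [degExp, coeff_mk]
  rw [hcS] at hc
  have hrhs : ∀ l ∈ range m, degFall (2 * lam) (2 * (l : ℝ) + 1) n
      = 2 ^ n * degFall lam ((l : ℝ) + 1/2) n := by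
    intro l _
    rw [show 2 * (l : ℝ) + 1 = 2 * ((l : ℝ) + 1/2) from by ring, degFall_two]
  rw [Finset.sum_congr rfl hrhs, ← Finset.mul_sum]
  set T := ∑ l ∈ range m, degFall lam ((l : ℝ) + 1/2) n with hT
  have hfac : ((n + 1).factorial : ℝ) = ((n : ℝ) + 1) * (n.factorial : ℝ) := by
    rw [Nat.factorial_succ]; push_cast; ring
  have h1 : ((n : ℝ) + 1) ≠ 0 := by positivity
  have h2 : (n.factorial : ℝ) ≠ 0 := Nat.cast_ne_zero.mpr n.factorial_ne_zero
  rw [hfac] at hc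
  field_simp at hc ⊢
  have hc' : bl (n + 1) (m : ℝ) - bl (n + 1) 0 = T * ((n : ℝ) + 1) :=
    mul_right_cancel₀ h2 (by linear_combination (n.factorial : ℝ) * hc)
  rw [hc']; ring

/-- (2^n/(n+1)) (b_{n+1,λ}(m) - b_{n+1,λ}) = ∑_{l=0}^{m-1} (2l+1)_{n,2λ},
where b_{k,λ}(x) are the degenerate Carlitz type 2 Bernoulli polynomials, defined by
(t/(e_λ^{1/2}(t)-e_λ^{-1/2}(t))) e_λ^x(t) = ∑ b_{n,λ}(x) t^n/n!. -/
theorem degenerate_carlitz_type2_bernoulli_power_sum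
    (lam : ℝ) (hlam : lam ≠ 0)
    (bl : ℕ → ℝ → ℝ)
    (hbl : ∀ x : ℝ,
      (PowerSeries.mk fun n => bl n x / (n.factorial : ℝ)) *
        (degExp lam (1/2) - degExp lam (-(1/2)))
        = PowerSeries.X * degExp lam x)
    (n : ℕ) (m : ℕ) (hm : 0 < m) :
    2 ^ n / ((n : ℝ) + 1) * (bl (n + 1) (m : ℝ) - bl (n + 1) 0)
      = ∑ l ∈ range m, degFall (2 * lam) (2 * (l : ℝ) + 1) n := by
  exact main_key lam bl hbl n m hm
end

section
/- For every odd positive integer d and every nonnegative integer n, the type 2 Euler polynomials satisfy E_n(x) = d^n \sum_{a=0}^{d-1} (-1)^a E_n((x + a + (1-d)/2)/d). -/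
open PowerSeries Finset

private lemma tele_aux {M : Type*} [AddCommGroup M] [Module ℝ M] (u : ℕ → M) (d : ℕ) :
    ∑ a ∈ range d, ((-1:ℝ)^a) • (u a + u (a+1)) = u 0 - ((-1:ℝ)^d) • u d := by
  induction d with
  | zero => simp
  | succ d ih =>
    rw [sum_range_succ, ih, pow_succ]
    module

/-- for odd positive d,
E_n(x) = d^n ∑_{a=0}^{d-1} (-1)^a E_n((x + a + (1-d)/2)/d). -/
theorem type2_euler_distribution
    (E : ℕ → ℝ → ℝ)
    (hE : ∀ x : ℝ,
      (PowerSeries.mk fun n => E n x / (n.factorial : ℝ)) *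
        (rescale (1/2 : ℝ) (exp ℝ) + rescale (-(1/2) : ℝ) (exp ℝ))
        = 2 * rescale x (exp ℝ))
    (d : ℕ) (hd : 0 < d) (hodd : Odd d) (n : ℕ) (x : ℝ) :
    E n x = (d : ℝ) ^ n *
      ∑ a ∈ range d, (-1 : ℝ) ^ a * E n ((x + (a : ℝ) + (1 - (d : ℝ)) / 2) / (d : ℝ)) := by
  have hdR : (d:ℝ) ≠ 0 := Nat.cast_ne_zero.mpr hd.ne'
  set F : ℝ → ℝ⟦X⟧ := fun z => PowerSeries.mk fun m => E m z / (m.factorial : ℝ) with hFdef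
  set y : ℕ → ℝ := fun a => (x + (a:ℝ) + (1 - (d:ℝ))/2) / (d:ℝ) with hy
  set D : ℝ⟦X⟧ := rescale (1/2:ℝ) (exp ℝ) + rescale (-(1/2):ℝ) (exp ℝ) with hD
  set Dd : ℝ⟦X⟧ := rescale ((d:ℝ)/2) (exp ℝ) + rescale (-((d:ℝ)/2)) (exp ℝ) with hDd
  set u : ℕ → ℝ⟦X⟧ := fun a => rescale (x + (a:ℝ) - (d:ℝ)/2) (exp ℝ) with hu
  have hDne : D ≠ 0 := by
    intro h
    have h0 := congrArg (PowerSeries.coeff (R := ℝ) 0) h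
    rw [hD, map_add, coeff_rescale, coeff_rescale, coeff_exp] at h0
    norm_num at h0
  have hDdne : Dd ≠ 0 := by
    intro h
    have h0 := congrArg (PowerSeries.coeff (R := ℝ) 0) h
    rw [hDd, map_add, coeff_rescale, coeff_rescale, coeff_exp] at h0
    norm_num at h0
  -- rescaled functional equation
  have hres : ∀ a : ℕ, rescale (d:ℝ) (F (y a)) * Dd
      = 2 * rescale (x + (a:ℝ) + (1 - (d:ℝ))/2) (exp ℝ) := by
    intro a
    have h1 := congrArg (rescale (d:ℝ)) (hE (y a))
    rw [map_mul, map_add, rescale_rescale, rescale_rescale, map_mul, rescale_rescale,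
      map_ofNat] at h1
    have e1 : (1/2 : ℝ) * d = (d:ℝ)/2 := by ring
    have e2 : (-(1/2) : ℝ) * d = -((d:ℝ)/2) := by ring
    have e3 : y a * d = x + (a:ℝ) + (1 - (d:ℝ))/2 := by
      rw [hy]; field_simp
    rw [e1, e2, e3] at h1
    exact h1
  -- key power series identity
  have key : F x = ∑ a ∈ range d, ((-1:ℝ)^a) • rescale (d:ℝ) (F (y a)) := by
    apply mul_right_cancel₀ (mul_ne_zero hDdne hDne)
    have lhs : F x * (Dd * D) = 2 * rescale x (exp ℝ) * Dd := by
      calc F x * (Dd * D) = (F x * D) * Dd := by ring_nf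
      _ = 2 * rescale x (exp ℝ) * Dd := by rw [hE x]
    rw [lhs, Finset.sum_mul]
    have step : ∀ a ∈ range d, ((-1:ℝ)^a) • rescale (d:ℝ) (F (y a)) * (Dd * D)
        = (2 : ℝ⟦X⟧) * (((-1:ℝ)^a) • (u a + u (a+1))) := by
      intro a _
      rw [smul_mul_assoc, ← mul_assoc, hres a]
      have expand : rescale (x + (a:ℝ) + (1 - (d:ℝ))/2) (exp ℝ) * D = u a + u (a+1) := by
        rw [hD, mul_add, exp_mul_exp_eq_exp_add, exp_mul_exp_eq_exp_add, hu]
        have e4 : x + (a:ℝ) + (1 - (d:ℝ))/2 + 1/2 = x + ((a:ℕ)+1 : ℕ) - (d:ℝ)/2 := by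
          push_cast; ring
        have e5 : x + (a:ℝ) + (1 - (d:ℝ))/2 + -(1/2) = x + (a:ℝ) - (d:ℝ)/2 := by ring
        rw [e4, e5, add_comm]
      rw [mul_assoc, expand, mul_smul_comm]
    rw [Finset.sum_congr rfl step, ← Finset.mul_sum, tele_aux u d, hodd.neg_one_pow]
    have h6 : u 0 - (-1 : ℝ) • u d = u 0 + u d := by
      rw [neg_smul, one_smul, sub_neg_eq_add]
    have h7 : u 0 + u d = rescale x (exp ℝ) * Dd := by
      rw [hu, hDd, mul_add, exp_mul_exp_eq_exp_add, exp_mul_exp_eq_exp_add]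
      rw [add_comm]
      congr 2 <;> push_cast <;> ring
    rw [h6, h7]; ring_nf
  -- extract coefficient n
  have hc := congrArg (PowerSeries.coeff (R := ℝ) n) key
  rw [map_sum] at hc
  simp only [hFdef, coeff_smul, coeff_rescale, coeff_mk, smul_eq_mul] at hc
  have hfac : (n.factorial : ℝ) ≠ 0 := Nat.cast_ne_zero.mpr n.factorial_ne_zero
  have h2 : E n x = ∑ a ∈ range d, (-1:ℝ)^a * ((d:ℝ)^n * E n (y a)) := by
    simp only [← mul_div_assoc] at hc
    rw [← Finset.sum_div, div_eq_div_iff hfac hfac] at hc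
    exact mul_right_cancel₀ hfac hc
  simp only [hy] at h2
  rw [h2, Finset.mul_sum]
  exact Finset.sum_congr rfl fun a _ => by ring
end

section
/- For all nonnegative integers n, the degenerate type 2 Euler polynomial satisfies E_{n,\lambda}(x) = \sum_{l=0}^{n} S_{1,\lambda}(n,l) E_l(x), where S_{1,\lambda}(n,l) are the degenerate Stirling numbers of the first kind and E_l(x) the type 2 Euler polynomials. -/
open PowerSeries Finset

/-- log(1+λt)/λ as a formal power series. -/
noncomputable def glog (lam : ℝ) : PowerSeries ℝ :=
  PowerSeries.mk fun n => if n = 0 then 0 else (-lam)^(n-1) / n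

/-- coefficients of powers of glog -/
noncomputable def gc (lam : ℝ) (n l : ℕ) : ℝ := PowerSeries.coeff n ((glog lam) ^ l)

lemma gc_zero_right (lam : ℝ) (n : ℕ) : gc lam n 0 = if n = 0 then 1 else 0 := by
  simp [gc, PowerSeries.coeff_one]

lemma gc_vanish (lam : ℝ) : ∀ l n, n < l → gc lam n l = 0 := by
  intro l
  induction l with
  | zero => intro n hn; omega
  | succ l ih =>
    intro n hn
    rw [gc, pow_succ, PowerSeries.coeff_mul]
    apply Finset.sum_eq_zero
    rintro ⟨i, j⟩ hij
    rw [Finset.HasAntidiagonal.mem_antidiagonal] at hij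
    rcases Nat.eq_zero_or_pos j with hj | hj
    · subst hj
      simp [glog]
    · have : i < l := by omega
      rw [show PowerSeries.coeff i ((glog lam)^l) = gc lam i l from rfl, ih i this, zero_mul]

lemma gc_mul (lam : ℝ) (p q n : ℕ) :
    ∑ ij ∈ Finset.HasAntidiagonal.antidiagonal n, gc lam ij.1 p * gc lam ij.2 q = gc lam n (p + q) := by
  rw [gc, pow_add, PowerSeries.coeff_mul]
  rfl

lemma glog_deriv (lam : ℝ) : d⁄dX ℝ (glog lam) = PowerSeries.mk fun n => (-lam)^n := by
  ext n
  rw [PowerSeries.coeff_derivative, PowerSeries.coeff_mk, glog, PowerSeries.coeff_mk]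
  rw [if_neg (Nat.succ_ne_zero n)]
  have : ((n:ℝ) + 1) ≠ 0 := by positivity
  push_cast
  field_simp

lemma glog_deriv_unit (lam : ℝ) :
    (1 + PowerSeries.C lam * PowerSeries.X) * d⁄dX ℝ (glog lam) = 1 := by
  rw [glog_deriv]
  ext n
  rw [add_mul, one_mul, map_add, mul_assoc, PowerSeries.coeff_C_mul]
  cases n with
  | zero => simp
  | succ n =>
    rw [PowerSeries.coeff_succ_X_mul, PowerSeries.coeff_mk, PowerSeries.coeff_mk,
      PowerSeries.coeff_one, if_neg (Nat.succ_ne_zero n)]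
    ring

lemma coeff_X_mul_deriv (f : PowerSeries ℝ) (n : ℕ) :
    PowerSeries.coeff n (PowerSeries.X * d⁄dX ℝ f) = PowerSeries.coeff n f * n := by
  cases n with
  | zero => simp
  | succ n =>
    rw [PowerSeries.coeff_succ_X_mul, PowerSeries.coeff_derivative]
    push_cast; ring

lemma gc_rec (lam : ℝ) (n l : ℕ) :
    gc lam (n+1) (l+1) * ((n:ℝ)+1) + lam * (gc lam n (l+1) * (n:ℝ))
      = ((l:ℝ)+1) * gc lam n l := by
  have h : (1 + PowerSeries.C lam * PowerSeries.X) * d⁄dX ℝ ((glog lam) ^ (l+1))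
      = ((l:ℕ)+1) • ((glog lam) ^ l) := by
    rw [Derivation.leibniz_pow, Nat.add_sub_cancel, smul_eq_mul, mul_smul_comm,
      show (1 + PowerSeries.C lam * PowerSeries.X) * (glog lam ^ l * d⁄dX ℝ (glog lam))
          = glog lam ^ l * ((1 + PowerSeries.C lam * PowerSeries.X) * d⁄dX ℝ (glog lam)) by ring,
      glog_deriv_unit, mul_one]
  have h2 := congrArg (PowerSeries.coeff n) h
  rw [add_mul, one_mul, map_add, mul_assoc, PowerSeries.coeff_C_mul, coeff_X_mul_deriv,
    PowerSeries.coeff_derivative, map_nsmul] at h2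
  rw [show ∀ y : ℝ, ((l:ℕ)+1) • y = ((l:ℝ)+1) * y by intro y; push_cast [nsmul_eq_mul]; ring] at h2
  convert h2 using 2 <;> rfl


lemma lemA (lam : ℝ) : ∀ (n : ℕ) (x : ℝ), degFall lam x n =
    ∑ l ∈ range (n+1), (n.factorial : ℝ)/(l.factorial : ℝ) * gc lam n l * x^l := by
  intro n
  induction n with
  | zero =>
    intro x
    simp [degFall, gc]
  | succ n ih =>
    intro x
    have hstep : ∀ l : ℕ, ((n+1).factorial : ℝ)/((l+1).factorial : ℝ) * gc lam (n+1) (l+1) * x^(l+1)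
        = ((n.factorial : ℝ)/(l.factorial : ℝ) * gc lam n l * x^l) * x
          - lam * (n:ℝ) * ((n.factorial : ℝ)/((l+1).factorial : ℝ) * gc lam n (l+1) * x^(l+1)) := by
      intro l
      have hrec := gc_rec lam n l
      have hf : (((l+1).factorial : ℕ) : ℝ) = ((l:ℝ)+1) * (l.factorial : ℝ) := by
        rw [Nat.factorial_succ]; push_cast; ring
      have hf2 : (((n+1).factorial : ℕ) : ℝ) = ((n:ℝ)+1) * (n.factorial : ℝ) := by
        rw [Nat.factorial_succ]; push_cast; ring
      have hl : ((l:ℝ)+1) ≠ 0 := by positivity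
      have hn : ((n:ℝ)+1) ≠ 0 := by positivity
      have hlf : ((l.factorial : ℕ) : ℝ) ≠ 0 := Nat.cast_ne_zero.mpr l.factorial_ne_zero
      have hn' : ((n:ℝ)+1) ≠ 0 := hn
      have key : gc lam (n+1) (l+1)
          = (((l:ℝ)+1) * gc lam n l - lam * (gc lam n (l+1) * (n:ℝ))) / ((n:ℝ)+1) := by
        field_simp
        linarith [hrec]
      rw [hf, hf2, key]
      field_simp
      ring
    rw [show degFall lam x (n+1) = degFall lam x n * (x - (n:ℝ) * lam) from rfl, ih x]
    rw [Finset.sum_range_succ'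
      (fun l => (((n+1).factorial : ℕ) : ℝ)/((l.factorial : ℕ) : ℝ) * gc lam (n+1) l * x^l) (n+1)]
    simp only [hstep]
    rw [Finset.sum_sub_distrib, ← Finset.sum_mul, ← Finset.mul_sum]
    have hT : ∑ l ∈ range (n+1),
        ((n.factorial : ℝ)/(((l+1).factorial : ℕ) : ℝ) * gc lam n (l+1) * x^(l+1))
        = (∑ l ∈ range (n+1), (n.factorial : ℝ)/((l.factorial : ℕ) : ℝ) * gc lam n l * x^l)
          - (n.factorial : ℝ) * gc lam n 0 := by
      have h1 := Finset.sum_range_succ'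
        (fun l => ((n.factorial : ℕ) : ℝ)/((l.factorial : ℕ) : ℝ) * gc lam n l * x^l) (n+1)
      have h2 := Finset.sum_range_succ
        (fun l => ((n.factorial : ℕ) : ℝ)/((l.factorial : ℕ) : ℝ) * gc lam n l * x^l) (n+1)
      rw [gc_vanish lam (n+1) n (by omega)] at h2
      simp only [Nat.factorial_zero, Nat.cast_one, div_one, pow_zero, mul_one, mul_zero,
        zero_mul, add_zero] at h1 h2
      linarith [h1, h2]
    rw [hT]
    have hgc0 : (n:ℝ) * gc lam n 0 = 0 := by
      cases n with
      | zero => simp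
      | succ m => rw [gc_zero_right]; simp
    have hgc0' : gc lam (n+1) 0 = 0 := by rw [gc_zero_right]; simp
    rw [hgc0']
    simp only [Nat.factorial_zero, Nat.cast_one, div_one, pow_zero, mul_one, mul_zero, add_zero]
    linear_combination (-lam * (n.factorial : ℝ)) * hgc0

/-- "composition with glog" transform, coefficientwise. -/
noncomputable def Phi (lam : ℝ) (a : ℕ → ℝ) : PowerSeries ℝ :=
  PowerSeries.mk fun n => ∑ p ∈ range (n+1), a p * gc lam n p

lemma Phi_coeff (lam : ℝ) (a : ℕ → ℝ) (n m : ℕ) (h : n ≤ m) :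
    PowerSeries.coeff n (Phi lam a) = ∑ p ∈ range (m+1), a p * gc lam n p := by
  rw [Phi, PowerSeries.coeff_mk]
  apply Finset.sum_subset
  · exact Finset.range_subset_range.mpr (by omega)
  · intro p hp hnp
    rw [Finset.mem_range] at hp hnp
    rw [gc_vanish lam p n (by omega), mul_zero]

lemma triangle {M : Type*} [AddCommMonoid M] (n : ℕ) (F : ℕ × ℕ → M)
    (hF : ∀ p q : ℕ, n < p + q → F (p, q) = 0) :
    ∑ m ∈ range (n+1), ∑ pq ∈ Finset.HasAntidiagonal.antidiagonal m, F pq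
      = ∑ p ∈ range (n+1), ∑ q ∈ range (n+1), F (p, q) := by
  have hdisj : (↑(range (n+1)) : Set ℕ).PairwiseDisjoint (Finset.HasAntidiagonal.antidiagonal : ℕ → Finset (ℕ × ℕ)) := by
    intro a _ b _ hab
    simp only [Function.onFun]
    rw [Finset.disjoint_left]
    rintro ⟨p, q⟩ hp hq
    rw [Finset.HasAntidiagonal.mem_antidiagonal] at hp hq
    exact hab (hp ▸ hq)
  rw [← Finset.sum_biUnion hdisj, ← Finset.sum_product']
  apply Finset.sum_subset
  · rintro ⟨p, q⟩ hpq
    rw [Finset.mem_biUnion] at hpq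
    obtain ⟨m, hm, hpq⟩ := hpq
    rw [Finset.mem_range] at hm
    rw [Finset.HasAntidiagonal.mem_antidiagonal] at hpq
    rw [Finset.mem_product, Finset.mem_range, Finset.mem_range]
    omega
  · rintro ⟨p, q⟩ hpq hnot
    rw [Finset.mem_biUnion] at hnot
    apply hF
    by_contra hle
    push_neg at hle
    exact hnot ⟨p + q, Finset.mem_range.mpr (by omega), Finset.HasAntidiagonal.mem_antidiagonal.mpr rfl⟩

lemma Phi_mul (lam : ℝ) (a b : ℕ → ℝ) :
    Phi lam (fun m => ∑ pq ∈ Finset.HasAntidiagonal.antidiagonal m, a pq.1 * b pq.2) = Phi lam a * Phi lam b := by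
  ext n
  rw [PowerSeries.coeff_mul, Phi, PowerSeries.coeff_mk]
  have hL : ∑ m ∈ range (n+1), (∑ pq ∈ Finset.HasAntidiagonal.antidiagonal m, a pq.1 * b pq.2) * gc lam n m
      = ∑ m ∈ range (n+1), ∑ pq ∈ Finset.HasAntidiagonal.antidiagonal m, a pq.1 * b pq.2 * gc lam n (pq.1 + pq.2) := by
    apply Finset.sum_congr rfl
    intro m _
    rw [Finset.sum_mul]
    apply Finset.sum_congr rfl
    rintro ⟨p, q⟩ hpq
    rw [Finset.HasAntidiagonal.mem_antidiagonal] at hpq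
    rw [hpq]
  rw [hL, triangle n (fun pq => a pq.1 * b pq.2 * gc lam n (pq.1 + pq.2))
    (fun p q h => by simp only []; rw [gc_vanish lam (p+q) n h, mul_zero])]
  have hR : ∀ ij : ℕ × ℕ, ij ∈ Finset.HasAntidiagonal.antidiagonal n →
      PowerSeries.coeff ij.1 (Phi lam a) * PowerSeries.coeff ij.2 (Phi lam b)
        = ∑ p ∈ range (n+1), ∑ q ∈ range (n+1), a p * gc lam ij.1 p * (b q * gc lam ij.2 q) := by
    rintro ⟨i, j⟩ hij
    rw [Finset.HasAntidiagonal.mem_antidiagonal] at hij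
    rw [Phi_coeff lam a i n (by omega), Phi_coeff lam b j n (by omega), Finset.sum_mul_sum]
  have hRR : ∑ ij ∈ Finset.HasAntidiagonal.antidiagonal n,
      PowerSeries.coeff ij.1 (Phi lam a) * PowerSeries.coeff ij.2 (Phi lam b)
      = ∑ p ∈ range (n+1), ∑ q ∈ range (n+1), a p * b q * gc lam n (p + q) := by
    rw [Finset.sum_congr rfl hR, Finset.sum_comm]
    refine Finset.sum_congr rfl fun p _ => ?_
    rw [Finset.sum_comm]
    refine Finset.sum_congr rfl fun q _ => ?_
    rw [← gc_mul lam p q n, Finset.mul_sum]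
    exact Finset.sum_congr rfl fun ij _ => by ring
  rw [hRR]


lemma Phi_add (lam : ℝ) (a b : ℕ → ℝ) :
    Phi lam (fun p => a p + b p) = Phi lam a + Phi lam b := by
  ext n
  simp [Phi, add_mul, Finset.sum_add_distrib]

lemma Phi_Cmul (lam r : ℝ) (a : ℕ → ℝ) :
    Phi lam (fun p => r * a p) = PowerSeries.C r * Phi lam a := by
  ext n
  simp [Phi, PowerSeries.coeff_C_mul, Finset.mul_sum, mul_assoc]

lemma degExp_eq_Phi (lam x : ℝ) :
    degExp lam x = Phi lam (fun p => x^p / (p.factorial : ℝ)) := by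
  ext n
  rw [degExp, PowerSeries.coeff_mk, Phi, PowerSeries.coeff_mk, lemA lam n x, Finset.sum_div]
  refine Finset.sum_congr rfl fun l _ => ?_
  have h1 : ((n.factorial : ℕ) : ℝ) ≠ 0 := Nat.cast_ne_zero.mpr n.factorial_ne_zero
  have h2 : ((l.factorial : ℕ) : ℝ) ≠ 0 := Nat.cast_ne_zero.mpr l.factorial_ne_zero
  field_simp

lemma coeff_unique (n : ℕ) (a b : ℕ → ℝ)
    (h : ∀ x : ℝ, ∑ l ∈ range (n+1), a l * x^l = ∑ l ∈ range (n+1), b l * x^l) :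
    ∀ l ∈ range (n+1), a l = b l := by
  intro l hl
  set p : Polynomial ℝ := ∑ k ∈ range (n+1), Polynomial.C (a k) * Polynomial.X ^ k with hp
  set q : Polynomial ℝ := ∑ k ∈ range (n+1), Polynomial.C (b k) * Polynomial.X ^ k with hq
  have hpq : p = q := by
    apply Polynomial.funext
    intro x
    simp only [hp, hq, Polynomial.eval_finset_sum, Polynomial.eval_mul, Polynomial.eval_C,
      Polynomial.eval_pow, Polynomial.eval_X]
    exact h x
  have hcp : p.coeff l = a l := by
    rw [hp, Polynomial.finset_sum_coeff]
    simp only [Polynomial.coeff_C_mul, Polynomial.coeff_X_pow]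
    rw [Finset.sum_eq_single l (fun k _ hk => by rw [if_neg (fun hh => hk hh.symm), mul_zero])
      (fun hh => absurd hl hh)]
    simp
  have hcq : q.coeff l = b l := by
    rw [hq, Polynomial.finset_sum_coeff]
    simp only [Polynomial.coeff_C_mul, Polynomial.coeff_X_pow]
    rw [Finset.sum_eq_single l (fun k _ hk => by rw [if_neg (fun hh => hk hh.symm), mul_zero])
      (fun hh => absurd hl hh)]
    simp
  rw [← hcp, ← hcq, hpq]

/-- E_{n,λ}(x) = ∑_{l=0}^n S_{1,λ}(n,l) E_l(x), where E_{n,λ}(x) are the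
degenerate type 2 Euler polynomials, S_{1,λ} the degenerate Stirling numbers of the
first kind, and E_l(x) the type 2 Euler polynomials. -/
theorem degenerate_type2_euler_stirling
    (lam : ℝ) (hlam : lam ≠ 0)
    (Ed : ℕ → ℝ → ℝ) (S : ℕ → ℕ → ℝ) (E : ℕ → ℝ → ℝ)
    (hEd : ∀ x : ℝ,
      (PowerSeries.mk fun n => Ed n x / (n.factorial : ℝ)) *
        (degExp lam (1/2) + degExp lam (-(1/2)))
        = 2 * degExp lam x)
    (hS : ∀ (n : ℕ) (x : ℝ), degFall lam x n = ∑ l ∈ range (n + 1), S n l * x ^ l)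
    (hE : ∀ x : ℝ,
      (PowerSeries.mk fun n => E n x / (n.factorial : ℝ)) *
        (rescale (1/2 : ℝ) (exp ℝ) + rescale (-(1/2) : ℝ) (exp ℝ))
        = 2 * rescale x (exp ℝ))
    (n : ℕ) (x : ℝ) :
    Ed n x = ∑ l ∈ range (n + 1), S n l * E l x := by
  classical
  -- identify S with the coefficients of powers of glog
  have SL : ∀ (m : ℕ) (l : ℕ), l ∈ range (m+1) →
      S m l = ((m.factorial : ℕ) : ℝ) / ((l.factorial : ℕ) : ℝ) * gc lam m l := by
    intro m
    refine coeff_unique m (S m) _ (fun y => ?_)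
    rw [← hS m y, lemA lam m y]
  -- the series F built from the claimed RHS
  set F : PowerSeries ℝ := PowerSeries.mk fun m =>
    (∑ l ∈ range (m + 1), S m l * E l x) / (m.factorial : ℝ) with hF
  have hFPhi : F = Phi lam (fun p => E p x / (p.factorial : ℝ)) := by
    ext m
    rw [hF, PowerSeries.coeff_mk, Phi, PowerSeries.coeff_mk, Finset.sum_div]
    refine Finset.sum_congr rfl fun l hl => ?_
    rw [SL m l hl]
    have h1 : ((m.factorial : ℕ) : ℝ) ≠ 0 := Nat.cast_ne_zero.mpr m.factorial_ne_zero
    have h2 : ((l.factorial : ℕ) : ℝ) ≠ 0 := Nat.cast_ne_zero.mpr l.factorial_ne_zero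
    field_simp
  -- coefficient form of hE
  have hEc : ∀ m : ℕ, ∑ pq ∈ Finset.HasAntidiagonal.antidiagonal m,
      (E pq.1 x / (pq.1.factorial : ℝ)) *
        (((1/2 : ℝ)^pq.2 / (pq.2.factorial : ℝ)) + ((-(1/2) : ℝ)^pq.2 / (pq.2.factorial : ℝ)))
      = 2 * (x^m / (m.factorial : ℝ)) := by
    intro m
    have h2C : (2 : PowerSeries ℝ) = PowerSeries.C 2 := by
      rw [map_ofNat]
    have := congrArg (PowerSeries.coeff m) (hE x)
    rw [h2C, PowerSeries.coeff_C_mul, PowerSeries.coeff_mul] at this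
    simp only [map_add, PowerSeries.coeff_rescale, PowerSeries.coeff_exp, PowerSeries.coeff_mk,
      map_div₀, map_one, map_natCast] at this
    rw [Finset.sum_congr rfl (fun pq _ => by ring :
      ∀ pq ∈ Finset.HasAntidiagonal.antidiagonal m,
        (E pq.1 x / (pq.1.factorial : ℝ)) *
          (((1/2 : ℝ)^pq.2 / (pq.2.factorial : ℝ)) + ((-(1/2) : ℝ)^pq.2 / (pq.2.factorial : ℝ)))
        = E pq.1 x / (pq.1.factorial : ℝ) *
            ((1/2 : ℝ)^pq.2 * (1 / (pq.2.factorial : ℝ)) +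
              (-(1/2) : ℝ)^pq.2 * (1 / (pq.2.factorial : ℝ)))), this]
    ring
  -- the denominator series
  set D : PowerSeries ℝ := degExp lam (1/2) + degExp lam (-(1/2)) with hD
  have hDPhi : D = Phi lam (fun q =>
      ((1/2 : ℝ)^q / (q.factorial : ℝ)) + ((-(1/2) : ℝ)^q / (q.factorial : ℝ))) := by
    rw [hD, degExp_eq_Phi, degExp_eq_Phi, ← Phi_add]
  -- main product identity
  have hFD : F * D = 2 * degExp lam x := by
    rw [hFPhi, hDPhi, ← Phi_mul]
    have : (fun m => ∑ pq ∈ Finset.HasAntidiagonal.antidiagonal m,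
        (E pq.1 x / (pq.1.factorial : ℝ)) *
          (((1/2 : ℝ)^pq.2 / (pq.2.factorial : ℝ)) + ((-(1/2) : ℝ)^pq.2 / (pq.2.factorial : ℝ))))
        = (fun m => 2 * (x^m / (m.factorial : ℝ))) := funext hEc
    rw [this, Phi_Cmul lam 2 (fun m => x^m / (m.factorial : ℝ)), ← degExp_eq_Phi]
    rw [show PowerSeries.C 2 = (2 : PowerSeries ℝ) from map_ofNat _ 2]
  -- cancel D
  have hDne : D ≠ 0 := by
    intro h0
    have := congrArg (PowerSeries.constantCoeff) h0
    rw [hD] at this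
    simp [degExp, degFall, PowerSeries.constantCoeff_mk] at this
  have hcancel : (PowerSeries.mk fun m => Ed m x / (m.factorial : ℝ)) = F :=
    mul_right_cancel₀ hDne (by rw [hEd x, ← hFD])
  have := congrArg (PowerSeries.coeff n) hcancel
  rw [hF, PowerSeries.coeff_mk, PowerSeries.coeff_mk, div_eq_div_iff
    (Nat.cast_ne_zero.mpr n.factorial_ne_zero) (Nat.cast_ne_zero.mpr n.factorial_ne_zero)] at this
  exact mul_right_cancel₀ (Nat.cast_ne_zero.mpr n.factorial_ne_zero) this
end
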